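/- There is no nonzero Lotka-Volterra vector field on S²×S¹: if χ = (P₁,P₂,P₃,P₄) is a polynomial vector field in ℝ⁴ with Pᵢ = xᵢ·ℓᵢ for polynomials ℓᵢ ∈ ℝ[x₁,x₂,x₃,x₄] of degree at most 1 (i = 1,2,3,4), and χ is a vector field on S²×S¹, then P₁ = P₂ = P₃ = P₄ = 0. -/
import Mathlib


open MvPolynomial

/-- The action of the polynomial vector field `χ = (P 0, P 1, P 2, P 3)` on a polynomial:
`χf = Σᵢ Pᵢ ∂f/∂xᵢ`. -/
noncomputable def chi (P : Fin 4 → MvPolynomial (Fin 4) ℝ)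
    (f : MvPolynomial (Fin 4) ℝ) : MvPolynomial (Fin 4) ℝ :=
  ∑ i, P i * pderiv i f

/-- `G_b = (x₁² + x₂² + x₃² - b²)² + x₄² - 1`, whose zero set is `S² × S¹`. -/
noncomputable def Gb (b : ℝ) : MvPolynomial (Fin 4) ℝ :=
  (X 0 ^ 2 + X 1 ^ 2 + X 2 ^ 2 - C (b ^ 2)) ^ 2 + X 3 ^ 2 - 1

lemma single_cases_aux (m : Fin 4 →₀ ℕ) (h4 : m 0 + m 1 + m 2 + m 3 ≤ 1)
    (h0 : m ≠ 0) : ∃ j, Finsupp.single j 1 = m := by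
  have hex : ∃ i, m i ≠ 0 := by
    by_contra hc
    push_neg at hc
    exact h0 (Finsupp.ext fun i => hc i)
  obtain ⟨i, hi⟩ := hex
  refine ⟨i, Finsupp.ext fun k => ?_⟩
  fin_cases i <;> fin_cases k <;>
    simp_all [Finsupp.single_apply] <;> omega

lemma repr_deg_le_one (q : MvPolynomial (Fin 4) ℝ) (h : q.totalDegree ≤ 1) :
    q = C (coeff 0 q) + ∑ j : Fin 4, C (coeff (Finsupp.single j 1) q) * X j := by
  apply MvPolynomial.ext
  intro m
  rw [coeff_add, coeff_C, coeff_sum]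
  simp only [coeff_C_mul, coeff_X']
  by_cases h0 : m = 0
  · subst h0
    simp
  · by_cases h1 : ∃ j, Finsupp.single j 1 = m
    · obtain ⟨j, hj⟩ := h1
      subst hj
      rw [Finset.sum_eq_single j]
      · rw [if_neg (fun he => h0 he.symm)]
        simp
      · intro k _ hk
        simp only [mul_ite, mul_one, mul_zero, ite_eq_right_iff]
        intro he
        exact absurd ((Finsupp.single_left_inj one_ne_zero).mp he) hk
      · simp
    · have hz : coeff m q = 0 := by
        by_contra hc
        have hle := le_totalDegree (MvPolynomial.mem_support_iff.mpr hc)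
        have hsum : m.sum (fun _ e => e) ≤ 1 := hle.trans h
        rw [Finsupp.sum_fintype] at hsum
        · have h4 : m 0 + m 1 + m 2 + m 3 ≤ 1 := by
            simpa [Fin.sum_univ_four] using hsum
          exact h1 (single_cases_aux m h4 h0)
        · intro; rfl
      rw [hz, if_neg (fun he => h0 he.symm), Finset.sum_eq_zero]
      · simp
      · intro j _
        rw [if_neg (fun he => h1 ⟨j, he⟩), mul_zero]

lemma zero_of_deg_le_one (q : MvPolynomial (Fin 4) ℝ) (h : q.totalDegree ≤ 1)
    (h0 : coeff 0 q = 0) (h1 : ∀ j, coeff (Finsupp.single j 1) q = 0) : q = 0 := by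
  rw [repr_deg_le_one q h, h0]
  simp [h1]

lemma eval_chi (b : ℝ) (P ℓ : Fin 4 → MvPolynomial (Fin 4) ℝ)
    (hLV : ∀ i, P i = X i * ℓ i) (p : Fin 4 → ℝ) :
    eval p (chi P (Gb b)) =
      4*(p 0^2+p 1^2+p 2^2-b^2)*(p 0^2*eval p (ℓ 0)+p 1^2*eval p (ℓ 1)+p 2^2*eval p (ℓ 2))
      + 2*(p 3)^2*eval p (ℓ 3) := by
  simp only [chi, Gb, hLV, Fin.sum_univ_four]
  simp [pderiv_X, Derivation.leibniz, pderiv_C]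
  ring

theorem stmt_14 (b : ℝ) (hb : 1 < b) (P ℓ : Fin 4 → MvPolynomial (Fin 4) ℝ)
    (hLV : ∀ i, P i = X i * ℓ i) (hdeg : ∀ i, (ℓ i).totalDegree ≤ 1)
    (hvf : ∃ K : MvPolynomial (Fin 4) ℝ, chi P (Gb b) = K * Gb b) :
    ∀ i, P i = 0 := by
  obtain ⟨K, hK⟩ := hvf
  set a : Fin 4 → ℝ := fun i => coeff 0 (ℓ i) with ha_def
  set c : Fin 4 → Fin 4 → ℝ := fun i j => coeff (Finsupp.single j 1) (ℓ i) with hc_def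
  have hE : ∀ (i : Fin 4) (p : Fin 4 → ℝ), eval p (ℓ i) =
      a i + c i 0 * p 0 + c i 1 * p 1 + c i 2 * p 2 + c i 3 * p 3 := by
    intro i p
    conv_lhs => rw [repr_deg_le_one (ℓ i) (hdeg i)]
    simp [Fin.sum_univ_four, ha_def, hc_def]
    ring
  have hkey : ∀ x1 x2 x3 x4 : ℝ, (x1^2+x2^2+x3^2-b^2)^2+x4^2-1 = 0 →
      4*(x1^2+x2^2+x3^2-b^2)*(x1^2*(a 0 + c 0 0*x1 + c 0 1*x2 + c 0 2*x3 + c 0 3*x4)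
        + x2^2*(a 1 + c 1 0*x1 + c 1 1*x2 + c 1 2*x3 + c 1 3*x4)
        + x3^2*(a 2 + c 2 0*x1 + c 2 1*x2 + c 2 2*x3 + c 2 3*x4))
      + 2*x4^2*(a 3 + c 3 0*x1 + c 3 1*x2 + c 3 2*x3 + c 3 3*x4) = 0 := by
    intro x1 x2 x3 x4 hG
    have h0 : eval ![x1,x2,x3,x4] (Gb b) = 0 := by
      simp [Gb]
      linear_combination hG
    have h1 := congrArg (eval ![x1,x2,x3,x4]) hK
    rw [eval_chi b P ℓ hLV, map_mul, h0, mul_zero] at h1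
    rw [hE 0, hE 1, hE 2, hE 3] at h1
    simp only [Matrix.cons_val_zero, Matrix.cons_val_one, Matrix.head_cons,
      Matrix.cons_val_two, Matrix.tail_cons, Matrix.cons_val_three] at h1
    linear_combination h1
  -- basic positivity facts
  have hbpos : (0:ℝ) < b := lt_trans one_pos hb
  set s : ℝ := Real.sqrt (b^2+1) with hs_def
  have hs2 : s^2 = b^2+1 := Real.sq_sqrt (by positivity)
  have hspos : 0 < s := Real.sqrt_pos.mpr (by positivity)
  have hs2' : s^2 - b^2 - 1 = 0 := by linarith
  set t : ℝ := Real.sqrt (b^2+3/5) with ht_def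
  have ht2 : t^2 = b^2+3/5 := Real.sq_sqrt (by positivity)
  have htpos : 0 < t := Real.sqrt_pos.mpr (by positivity)
  have ht2' : t^2 - b^2 - 3/5 = 0 := by linarith
  -- Block 1: ℓ 3 coefficients, via points (±b,0,0,±1), (0,b,0,1), (0,0,b,1)
  have E1 := hkey b 0 0 1 (by ring)
  have E2 := hkey b 0 0 (-1) (by ring)
  have E3 := hkey (-b) 0 0 1 (by ring)
  have E4 := hkey 0 b 0 1 (by ring)
  have E5 := hkey 0 0 b 1 (by ring)
  have hc33 : c 3 3 = 0 := by linear_combination (1/4)*E1 - (1/4)*E2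
  have hc30 : c 3 0 = 0 := by
    have hb30 : b * c 3 0 = 0 := by linear_combination (1/4)*E1 - (1/4)*E3
    exact (mul_eq_zero.mp hb30).resolve_left (ne_of_gt hbpos)
  have ha3 : a 3 = 0 := by linear_combination (1/2)*E1 - b*hc30 - hc33
  have hc31 : c 3 1 = 0 := by
    have hb31 : b * c 3 1 = 0 := by linear_combination (1/2)*E4 - ha3 - hc33
    exact (mul_eq_zero.mp hb31).resolve_left (ne_of_gt hbpos)
  have hc32 : c 3 2 = 0 := by
    have hb32 : b * c 3 2 = 0 := by linear_combination (1/2)*E5 - ha3 - hc33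
    exact (mul_eq_zero.mp hb32).resolve_left (ne_of_gt hbpos)
  -- Block 2: constants and diagonal coefficients of ℓ 0, ℓ 1, ℓ 2
  have gs : ∀ u v w : ℝ, u^2+v^2+w^2 = s^2 → (u^2+v^2+w^2-b^2)^2+(0:ℝ)^2-1 = 0 := by
    intro u v w huv
    rw [huv]
    linear_combination (s^2-b^2+1)*hs2'
  have F1 := hkey s 0 0 0 (gs s 0 0 (by ring))
  have F1' := hkey (-s) 0 0 0 (gs (-s) 0 0 (by ring))
  have F2 := hkey 0 s 0 0 (gs 0 s 0 (by ring))
  have F2' := hkey 0 (-s) 0 0 (gs 0 (-s) 0 (by ring))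
  have F3 := hkey 0 0 s 0 (gs 0 0 s (by ring))
  have F3' := hkey 0 0 (-s) 0 (gs 0 0 (-s) (by ring))
  have sne : s ≠ 0 := ne_of_gt hspos
  have s2ne : s^2 ≠ 0 := pow_ne_zero 2 sne
  have D1 : a 0 + c 0 0 * s = 0 := by
    have h : s^2*(a 0 + c 0 0 * s) = 0 := by
      linear_combination (1/4)*F1 - (s^2*(a 0 + c 0 0*s))*hs2'
    exact (mul_eq_zero.mp h).resolve_left s2ne
  have D1' : a 0 - c 0 0 * s = 0 := by
    have h : s^2*(a 0 - c 0 0 * s) = 0 := by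
      linear_combination (1/4)*F1' - (s^2*(a 0 - c 0 0*s))*hs2'
    exact (mul_eq_zero.mp h).resolve_left s2ne
  have hc00 : c 0 0 = 0 := by
    have h : c 0 0 * s = 0 := by linarith
    exact (mul_eq_zero.mp h).resolve_right sne
  have ha0 : a 0 = 0 := by linear_combination D1 - s*hc00
  have D2 : a 1 + c 1 1 * s = 0 := by
    have h : s^2*(a 1 + c 1 1 * s) = 0 := by
      linear_combination (1/4)*F2 - (s^2*(a 1 + c 1 1*s))*hs2'
    exact (mul_eq_zero.mp h).resolve_left s2ne
  have D2' : a 1 - c 1 1 * s = 0 := by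
    have h : s^2*(a 1 - c 1 1 * s) = 0 := by
      linear_combination (1/4)*F2' - (s^2*(a 1 - c 1 1*s))*hs2'
    exact (mul_eq_zero.mp h).resolve_left s2ne
  have hc11 : c 1 1 = 0 := by
    have h : c 1 1 * s = 0 := by linarith
    exact (mul_eq_zero.mp h).resolve_right sne
  have ha1 : a 1 = 0 := by linear_combination D2 - s*hc11
  have D3 : a 2 + c 2 2 * s = 0 := by
    have h : s^2*(a 2 + c 2 2 * s) = 0 := by
      linear_combination (1/4)*F3 - (s^2*(a 2 + c 2 2*s))*hs2'
    exact (mul_eq_zero.mp h).resolve_left s2ne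
  have D3' : a 2 - c 2 2 * s = 0 := by
    have h : s^2*(a 2 - c 2 2 * s) = 0 := by
      linear_combination (1/4)*F3' - (s^2*(a 2 - c 2 2*s))*hs2'
    exact (mul_eq_zero.mp h).resolve_left s2ne
  have hc22 : c 2 2 = 0 := by
    have h : c 2 2 * s = 0 := by linarith
    exact (mul_eq_zero.mp h).resolve_right sne
  have ha2 : a 2 = 0 := by linear_combination D3 - s*hc22
  have s3ne : s^3 ≠ 0 := pow_ne_zero 3 sne
  -- Block 3: off-diagonal coefficients among indices 0,1,2
  have M1 := hkey (3*s/5) (4*s/5) 0 0 (gs (3*s/5) (4*s/5) 0 (by ring))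
  have M2 := hkey (3*s/5) (-(4*s/5)) 0 0 (gs (3*s/5) (-(4*s/5)) 0 (by ring))
  rw [ha0, hc00, ha1, hc11] at M1 M2
  have Q1 : s^3*(3*c 0 1 + 4*c 1 0) = 0 := by
    linear_combination (125/48)*M1 - (s^3*(3*c 0 1 + 4*c 1 0))*hs2'
  have Q2 : s^3*(-(3*c 0 1) + 4*c 1 0) = 0 := by
    linear_combination (125/48)*M2 - (s^3*(-(3*c 0 1) + 4*c 1 0))*hs2'
  have hc01 : c 0 1 = 0 := by
    have h : s^3 * c 0 1 = 0 := by linear_combination (1/6)*Q1 - (1/6)*Q2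
    exact (mul_eq_zero.mp h).resolve_left s3ne
  have hc10 : c 1 0 = 0 := by
    have h : s^3 * c 1 0 = 0 := by linear_combination (1/8)*Q1 + (1/8)*Q2
    exact (mul_eq_zero.mp h).resolve_left s3ne
  have M3 := hkey (3*s/5) 0 (4*s/5) 0 (gs (3*s/5) 0 (4*s/5) (by ring))
  have M4 := hkey (3*s/5) 0 (-(4*s/5)) 0 (gs (3*s/5) 0 (-(4*s/5)) (by ring))
  rw [ha0, hc00, ha2, hc22] at M3 M4
  have Q3 : s^3*(3*c 0 2 + 4*c 2 0) = 0 := by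
    linear_combination (125/48)*M3 - (s^3*(3*c 0 2 + 4*c 2 0))*hs2'
  have Q4 : s^3*(-(3*c 0 2) + 4*c 2 0) = 0 := by
    linear_combination (125/48)*M4 - (s^3*(-(3*c 0 2) + 4*c 2 0))*hs2'
  have hc02 : c 0 2 = 0 := by
    have h : s^3 * c 0 2 = 0 := by linear_combination (1/6)*Q3 - (1/6)*Q4
    exact (mul_eq_zero.mp h).resolve_left s3ne
  have hc20 : c 2 0 = 0 := by
    have h : s^3 * c 2 0 = 0 := by linear_combination (1/8)*Q3 + (1/8)*Q4
    exact (mul_eq_zero.mp h).resolve_left s3ne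
  have M5 := hkey 0 (3*s/5) (4*s/5) 0 (gs 0 (3*s/5) (4*s/5) (by ring))
  have M6 := hkey 0 (3*s/5) (-(4*s/5)) 0 (gs 0 (3*s/5) (-(4*s/5)) (by ring))
  rw [ha1, hc11, ha2, hc22] at M5 M6
  have Q5 : s^3*(3*c 1 2 + 4*c 2 1) = 0 := by
    linear_combination (125/48)*M5 - (s^3*(3*c 1 2 + 4*c 2 1))*hs2'
  have Q6 : s^3*(-(3*c 1 2) + 4*c 2 1) = 0 := by
    linear_combination (125/48)*M6 - (s^3*(-(3*c 1 2) + 4*c 2 1))*hs2'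
  have hc12 : c 1 2 = 0 := by
    have h : s^3 * c 1 2 = 0 := by linear_combination (1/6)*Q5 - (1/6)*Q6
    exact (mul_eq_zero.mp h).resolve_left s3ne
  have hc21 : c 2 1 = 0 := by
    have h : s^3 * c 2 1 = 0 := by linear_combination (1/8)*Q5 + (1/8)*Q6
    exact (mul_eq_zero.mp h).resolve_left s3ne
  -- Block 4: the x₄-coefficients of ℓ 0, ℓ 1, ℓ 2
  have gt4 : ∀ u v w : ℝ, u^2+v^2+w^2 = t^2 → (u^2+v^2+w^2-b^2)^2+(4/5:ℝ)^2-1 = 0 := by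
    intro u v w huv
    rw [huv]
    linear_combination (t^2-b^2+3/5)*ht2'
  have t2ne : t^2 ≠ 0 := pow_ne_zero 2 (ne_of_gt htpos)
  have N1 := hkey t 0 0 (4/5) (gt4 t 0 0 (by ring))
  rw [ha0, hc00, ha3, hc30, hc33] at N1
  have hc03 : c 0 3 = 0 := by
    have h : t^2 * c 0 3 = 0 := by
      linear_combination (25/48)*N1 - (5/3)*(t^2*c 0 3)*ht2'
    exact (mul_eq_zero.mp h).resolve_left t2ne
  have N2 := hkey 0 t 0 (4/5) (gt4 0 t 0 (by ring))
  rw [ha1, hc11, ha3, hc31, hc33] at N2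
  have hc13 : c 1 3 = 0 := by
    have h : t^2 * c 1 3 = 0 := by
      linear_combination (25/48)*N2 - (5/3)*(t^2*c 1 3)*ht2'
    exact (mul_eq_zero.mp h).resolve_left t2ne
  have N3 := hkey 0 0 t (4/5) (gt4 0 0 t (by ring))
  rw [ha2, hc22, ha3, hc32, hc33] at N3
  have hc23 : c 2 3 = 0 := by
    have h : t^2 * c 2 3 = 0 := by
      linear_combination (25/48)*N3 - (5/3)*(t^2*c 2 3)*ht2'
    exact (mul_eq_zero.mp h).resolve_left t2ne
  -- conclude each ℓ i = 0, hence P i = 0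
  have hl : ∀ i, ℓ i = 0 := by
    intro i
    apply zero_of_deg_le_one (ℓ i) (hdeg i)
    · fin_cases i
      · exact ha0
      · exact ha1
      · exact ha2
      · exact ha3
    · intro j
      fin_cases i <;> fin_cases j
      · exact hc00
      · exact hc01
      · exact hc02
      · exact hc03
      · exact hc10
      · exact hc11
      · exact hc12
      · exact hc13
      · exact hc20
      · exact hc21
      · exact hc22
      · exact hc23
      · exact hc30
      · exact hc31
      · exact hc32
      · exact hc33
  intro i
  rw [hLV i, hl i, mul_zero]
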